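/- arXiv:2508.21155 — 6 statements merged into one kernel-verified Lean document; each statement's English description precedes it below -/
import Mathlib

section
/- Let J : ℝⁿ × ℝᵖ → ℝ be twice continuously differentiable, let θ̄, θ̃ ∈ ℝᵖ, set Δθ = θ̃ − θ̄ and θ(t) = θ̄ + t Δθ for t ∈ [0,1]. Suppose m̂ : [0,1] → ℝⁿ is differentiable, satisfies ∇_m J(m̂(t), θ(t)) = 0 for all t ∈ [0,1], and H(m̂(t), θ(t)) is invertible for all t ∈ [0,1]. Then m̂ solves the initial value problem dm̂/dt (t) = −H(m̂(t), θ(t))⁻¹ B(m̂(t), θ(t)) Δθ for t ∈ [0,1]. -/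
/-- The gradient of `J` with respect to its first argument `m`. -/
noncomputable def gradM {n p : ℕ}
    (J : EuclideanSpace ℝ (Fin n) × EuclideanSpace ℝ (Fin p) → ℝ)
    (m : EuclideanSpace ℝ (Fin n)) (θ : EuclideanSpace ℝ (Fin p)) :
    EuclideanSpace ℝ (Fin n) :=
  gradient (fun m' => J (m', θ)) m

/-- The Hessian `H(m, θ) = ∇²_{mm} J(m, θ)`, as the derivative of the gradient in `m`. -/
noncomputable def HessM {n p : ℕ}
    (J : EuclideanSpace ℝ (Fin n) × EuclideanSpace ℝ (Fin p) → ℝ)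
    (m : EuclideanSpace ℝ (Fin n)) (θ : EuclideanSpace ℝ (Fin p)) :
    EuclideanSpace ℝ (Fin n) →L[ℝ] EuclideanSpace ℝ (Fin n) :=
  fderiv ℝ (fun m' => gradM J m' θ) m

/-- The mixed second derivative `B(m, θ) = ∇²_{mθ} J(m, θ)`. -/
noncomputable def MixedB {n p : ℕ}
    (J : EuclideanSpace ℝ (Fin n) × EuclideanSpace ℝ (Fin p) → ℝ)
    (m : EuclideanSpace ℝ (Fin n)) (θ : EuclideanSpace ℝ (Fin p)) :
    EuclideanSpace ℝ (Fin p) →L[ℝ] EuclideanSpace ℝ (Fin n) :=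
  fderiv ℝ (fun θ' => gradM J m θ') θ

/-!
Along the curve `t ↦ (m̂ t, θ t)` the map `(m, θ) ↦ ∇_m J(m, θ)` is identically zero, so by the
chain rule its derivative `H ṁ + B Δθ` vanishes; applying the left inverse of `H` gives
`ṁ = -H⁻¹ B Δθ`. Since `J` is `C²`, the partial gradient is `C¹` jointly in `(m, θ)`, which is what
makes the chain rule applicable.
-/

open ContinuousLinearMap

section PartialDerivatives

variable {𝕜 E F G : Type*} [NontriviallyNormedField 𝕜]
  [NormedAddCommGroup E] [NormedSpace 𝕜 E] [NormedAddCommGroup F] [NormedSpace 𝕜 F]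
  [NormedAddCommGroup G] [NormedSpace 𝕜 G] {f : E × F → G}

theorem fderiv_comp_prodMk_left {x : E} {y : F} (hf : DifferentiableAt 𝕜 f (x, y)) :
    fderiv 𝕜 (fun x' => f (x', y)) x = (fderiv 𝕜 f (x, y)).comp (inl 𝕜 E F) :=
  (hf.hasFDerivAt.comp x (hasFDerivAt_prodMk_left x y)).fderiv

theorem fderiv_comp_prodMk_right {x : E} {y : F} (hf : DifferentiableAt 𝕜 f (x, y)) :
    fderiv 𝕜 (fun y' => f (x, y')) y = (fderiv 𝕜 f (x, y)).comp (inr 𝕜 E F) :=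
  (hf.hasFDerivAt.comp y (hasFDerivAt_prodMk_right x y)).fderiv

theorem fderiv_partials_add_eq_zero_of_vanishing_along {u : 𝕜 → E} {v : 𝕜 → F}
    {s : Set 𝕜} {t : 𝕜} (hf : DifferentiableAt 𝕜 f (u t, v t))
    (hu : DifferentiableWithinAt 𝕜 u s t) (hv : DifferentiableWithinAt 𝕜 v s t)
    (hs : UniqueDiffWithinAt 𝕜 s t) (hzero : ∀ r ∈ s, f (u r, v r) = 0) (ht : t ∈ s) :
    fderiv 𝕜 (fun x => f (x, v t)) (u t) (derivWithin u s t)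
      + fderiv 𝕜 (fun y => f (u t, y)) (v t) (derivWithin v s t) = 0 := by
  have hchain : HasDerivWithinAt (fun r => f (u r, v r))
      (fderiv 𝕜 f (u t, v t) (derivWithin u s t, derivWithin v s t)) s t :=
    hf.hasFDerivAt.comp_hasDerivWithinAt t (hu.hasDerivWithinAt.prodMk hv.hasDerivWithinAt)
  have hconst : HasDerivWithinAt (fun r => f (u r, v r)) 0 s t :=
    (hasDerivWithinAt_const t s 0).congr hzero (hzero t ht)
  rw [fderiv_comp_prodMk_left hf, fderiv_comp_prodMk_right hf]
  exact (comp_inl_add_comp_inr _ (_, _)).trans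
    ((hchain.derivWithin hs).symm.trans (hconst.derivWithin hs))

end PartialDerivatives

section PartialGradient

variable {E F : Type*} [NormedAddCommGroup E] [InnerProductSpace ℝ E] [CompleteSpace E]
  [NormedAddCommGroup F] [NormedSpace ℝ F] {J : E × F → ℝ}

theorem gradient_comp_prodMk_left {x : E} {y : F} (hJ : DifferentiableAt ℝ J (x, y)) :
    gradient (fun x' => J (x', y)) x
      = (InnerProductSpace.toDual ℝ E).symm ((fderiv ℝ J (x, y)).comp (inl ℝ E F)) := by
  rw [gradient, fderiv_comp_prodMk_left hJ]

theorem contDiff_gradient_comp_prodMk_left {k n : WithTop ℕ∞} (hJ : ContDiff ℝ n J)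
    (hk : k + 1 ≤ n) :
    ContDiff ℝ k (fun q : E × F => gradient (fun x => J (x, q.2)) q.1) := by
  have hdiff : Differentiable ℝ J :=
    (hJ.of_le (le_trans le_add_self hk)).differentiable one_ne_zero
  have hdual : ContDiff ℝ k (InnerProductSpace.toDual ℝ E).symm :=
    ((InnerProductSpace.toDual ℝ E).symm : StrongDual ℝ E ≃ₗᵢ[ℝ] E).contDiff
  simp_rw [gradient_comp_prodMk_left (hdiff _)]
  exact hdual.comp ((hJ.fderiv_right hk).clm_comp contDiff_const)

end PartialGradient

theorem stmt2_general {n p : ℕ}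
    (J : EuclideanSpace ℝ (Fin n) × EuclideanSpace ℝ (Fin p) → ℝ)
    (hJ : ContDiff ℝ 2 J)
    (θbar θtil : EuclideanSpace ℝ (Fin p))
    -- the path θ(t) = θ̄ + t (θ̃ - θ̄) with Δθ = θ̃ - θ̄
    (θpath : ℝ → EuclideanSpace ℝ (Fin p))
    (hθpath : ∀ t : ℝ, θpath t = θbar + t • (θtil - θbar))
    (mhat : ℝ → EuclideanSpace ℝ (Fin n))
    (hdiff : ∀ t ∈ Set.Icc (0:ℝ) 1, DifferentiableWithinAt ℝ mhat (Set.Icc (0:ℝ) 1) t)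
    (hopt : ∀ t ∈ Set.Icc (0:ℝ) 1, gradM J (mhat t) (θpath t) = 0)
    (Hinv : ℝ → (EuclideanSpace ℝ (Fin n) →L[ℝ] EuclideanSpace ℝ (Fin n)))
    (hinv2 : ∀ t ∈ Set.Icc (0:ℝ) 1, (Hinv t).comp (HessM J (mhat t) (θpath t))
        = ContinuousLinearMap.id ℝ (EuclideanSpace ℝ (Fin n))) :
    ∀ t ∈ Set.Icc (0:ℝ) 1,
      derivWithin mhat (Set.Icc (0:ℝ) 1) t
        = -(Hinv t (MixedB J (mhat t) (θpath t) (θtil - θbar))) := by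
  intro t ht
  have hG : Differentiable ℝ (fun q : _ × _ => gradM J q.1 q.2) :=
    (contDiff_gradient_comp_prodMk_left hJ (by norm_num)).differentiable one_ne_zero
  have hθ : HasDerivAt θpath (θtil - θbar) t := by
    simpa [funext hθpath] using ((hasDerivAt_id t).smul_const (θtil - θbar)).const_add θbar
  have hu : UniqueDiffWithinAt ℝ (Set.Icc (0:ℝ) 1) t := uniqueDiffOn_Icc zero_lt_one t ht
  have hsum : HessM J (mhat t) (θpath t) (derivWithin mhat (Set.Icc 0 1) t)
      + MixedB J (mhat t) (θpath t) (θtil - θbar) = 0 := by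
    rw [← hθ.hasDerivWithinAt.derivWithin hu]
    exact fderiv_partials_add_eq_zero_of_vanishing_along (hG _) (hdiff t ht)
      hθ.differentiableAt.differentiableWithinAt hu hopt ht
  calc derivWithin mhat (Set.Icc 0 1) t
      = Hinv t (HessM J (mhat t) (θpath t) (derivWithin mhat (Set.Icc 0 1) t)) :=
        (congrArg (· (derivWithin mhat (Set.Icc 0 1) t)) (hinv2 t ht)).symm
    _ = -(Hinv t (MixedB J (mhat t) (θpath t) (θtil - θbar))) := by
        rw [eq_neg_of_add_eq_zero_left hsum, map_neg]

theorem stmt2 {n p : ℕ}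
    (J : EuclideanSpace ℝ (Fin n) × EuclideanSpace ℝ (Fin p) → ℝ)
    (hJ : ContDiff ℝ 2 J)
    (θbar θtil : EuclideanSpace ℝ (Fin p))
    -- the path θ(t) = θ̄ + t (θ̃ - θ̄) with Δθ = θ̃ - θ̄
    (θpath : ℝ → EuclideanSpace ℝ (Fin p))
    (hθpath : ∀ t : ℝ, θpath t = θbar + t • (θtil - θbar))
    (mhat : ℝ → EuclideanSpace ℝ (Fin n))
    (hdiff : ∀ t ∈ Set.Icc (0:ℝ) 1, DifferentiableWithinAt ℝ mhat (Set.Icc (0:ℝ) 1) t)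
    (hopt : ∀ t ∈ Set.Icc (0:ℝ) 1, gradM J (mhat t) (θpath t) = 0)
    (Hinv : ℝ → (EuclideanSpace ℝ (Fin n) →L[ℝ] EuclideanSpace ℝ (Fin n)))
    (hinv1 : ∀ t ∈ Set.Icc (0:ℝ) 1, (HessM J (mhat t) (θpath t)).comp (Hinv t)
        = ContinuousLinearMap.id ℝ (EuclideanSpace ℝ (Fin n)))
    (hinv2 : ∀ t ∈ Set.Icc (0:ℝ) 1, (Hinv t).comp (HessM J (mhat t) (θpath t))
        = ContinuousLinearMap.id ℝ (EuclideanSpace ℝ (Fin n))) :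
    ∀ t ∈ Set.Icc (0:ℝ) 1,
      derivWithin mhat (Set.Icc (0:ℝ) 1) t
        = -(Hinv t (MixedB J (mhat t) (θpath t) (θtil - θbar))) :=
  stmt2_general J hJ θbar θtil θpath hθpath mhat hdiff hopt Hinv hinv2
end

section
/- Let E ∈ ℝ^{n×n} be symmetric positive definite and let y, z ∈ ℝⁿ satisfy the curvature condition yᵀz > 0. Set ρ = 1/(yᵀz) and define E⁺ = (I − ρ z yᵀ) E (I − ρ y zᵀ) + ρ z zᵀ. Then E⁺ is symmetric positive definite. -/
/-! With `A = I − ρ y zᵀ` the update is `Aᵀ E A + ρ z zᵀ`, a sum of two positive semidefinite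
matrices. If `xᵀ E⁺ x = 0` then `zᵀ x = 0`, hence `A x = x` and `xᵀ E⁺ x = xᵀ E x > 0`. -/

open Matrix

/-- The BFGS-type update `E⁺ = (I − ρ z yᵀ) E (I − ρ y zᵀ) + ρ z zᵀ` with `ρ = 1/(yᵀz)`. -/
noncomputable def bfgsUpdate {n : ℕ} (E : Matrix (Fin n) (Fin n) ℝ)
    (y z : Fin n → ℝ) : Matrix (Fin n) (Fin n) ℝ :=
  (1 - (y ⬝ᵥ z)⁻¹ • vecMulVec z y) * E * (1 - (y ⬝ᵥ z)⁻¹ • vecMulVec y z)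
    + (y ⬝ᵥ z)⁻¹ • vecMulVec z z

namespace Matrix

theorem dotProduct_smul_vecMulVec_self_mulVec {n R : Type*} [Fintype n] [CommRing R]
    (ρ : R) (z x : n → R) :
    x ⬝ᵥ ((ρ • vecMulVec z z) *ᵥ x) = ρ * (z ⬝ᵥ x) ^ 2 := by
  rw [smul_mulVec, vecMulVec_mulVec, dotProduct_smul, op_smul_eq_smul, dotProduct_smul,
    dotProduct_comm x z, smul_eq_mul, smul_eq_mul]
  ring

variable {n R : Type*} [Fintype n] [Ring R] [StarRing R]

theorem star_dotProduct_conjTranspose_mul_mul_mulVec (A E : Matrix n n R) (x : n → R) :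
    star x ⬝ᵥ ((Aᴴ * E * A) *ᵥ x) = star (A *ᵥ x) ⬝ᵥ (E *ᵥ (A *ᵥ x)) := by
  simp only [star_mulVec, dotProduct_mulVec, vecMul_vecMul]

theorem PosDef.conjTranspose_mul_mul_add_posSemidef [PartialOrder R] [IsOrderedAddMonoid R]
    {E P : Matrix n n R} (hE : E.PosDef) (hP : P.PosSemidef) (A : Matrix n n R)
    (hA : ∀ x, star x ⬝ᵥ (P *ᵥ x) = 0 → A *ᵥ x = x) : (Aᴴ * E * A + P).PosDef := by
  have hEA := hE.posSemidef.conjTranspose_mul_mul_same A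
  refine PosDef.of_dotProduct_mulVec_pos (hEA.isHermitian.add hP.isHermitian) fun x hx => ?_
  rw [add_mulVec, dotProduct_add]
  rcases (hP.dotProduct_mulVec_nonneg x).eq_or_lt with hPx | hPx
  · rw [← hPx, add_zero, star_dotProduct_conjTranspose_mul_mul_mulVec, hA x hPx.symm]
    exact hE.dotProduct_mulVec_pos hx
  · exact add_pos_of_nonneg_of_pos (hEA.dotProduct_mulVec_nonneg x) hPx

end Matrix

theorem bfgsUpdate_eq {n : ℕ} (E : Matrix (Fin n) (Fin n) ℝ) (y z : Fin n → ℝ) :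
    bfgsUpdate E y z = (1 - (y ⬝ᵥ z)⁻¹ • vecMulVec y z)ᴴ * E * (1 - (y ⬝ᵥ z)⁻¹ • vecMulVec y z)
      + (y ⬝ᵥ z)⁻¹ • vecMulVec z z := by
  simp [bfgsUpdate]

theorem stmt6 {n : ℕ} (E : Matrix (Fin n) (Fin n) ℝ) (hE : E.PosDef)
    (y z : Fin n → ℝ) (hyz : 0 < y ⬝ᵥ z) :
    (bfgsUpdate E y z).PosDef := by
  have hρ : 0 < (y ⬝ᵥ z)⁻¹ := inv_pos.mpr hyz
  rw [bfgsUpdate_eq]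
  refine hE.conjTranspose_mul_mul_add_posSemidef
    ((posSemidef_vecMulVec_self_star z).smul hρ.le) _ fun x hx => ?_
  simp only [star_trivial, dotProduct_smul_vecMulVec_self_mulVec] at hx
  have hzx : z ⬝ᵥ x = 0 := by simpa [hρ.ne'] using hx
  simp [sub_mulVec, smul_mulVec, vecMulVec_mulVec, hzx]
end

section
/- Let E ∈ ℝ^{n×n} be symmetric positive semidefinite, let P, W ∈ ℝ^{n×ℓ}, and suppose D = PᵀW is symmetric positive definite. Then the block BFGS update E^{up} = (I − P D⁻¹ Wᵀ) E (I − W D⁻¹ Pᵀ) + P D⁻¹ Pᵀ is symmetric positive semidefinite. -/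
open Matrix

/-- The block BFGS update `E^{up} = (I − P D⁻¹ Wᵀ) E (I − W D⁻¹ Pᵀ) + P D⁻¹ Pᵀ`
with `D = PᵀW`. -/
noncomputable def blockBFGSUpdate {n l : ℕ} (E : Matrix (Fin n) (Fin n) ℝ)
    (P W : Matrix (Fin n) (Fin l) ℝ) : Matrix (Fin n) (Fin n) ℝ :=
  (1 - P * (Pᵀ * W)⁻¹ * Wᵀ) * E * (1 - W * (Pᵀ * W)⁻¹ * Pᵀ) + P * (Pᵀ * W)⁻¹ * Pᵀ

theorem stmt10 {n l : ℕ} (E : Matrix (Fin n) (Fin n) ℝ) (hE : E.PosSemidef)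
    (P W : Matrix (Fin n) (Fin l) ℝ) (hD : (Pᵀ * W).PosDef) :
    (blockBFGSUpdate E P W).PosSemidef := by
  set D := Pᵀ * W with hDdef
  have hDsym : Dᵀ = D := by
    rw [← conjTranspose_eq_transpose_of_trivial, hD.isHermitian.eq]
  have hDinv : (D⁻¹)ᵀ = D⁻¹ := by
    rw [Matrix.transpose_nonsing_inv, hDsym]
  have hA : (1 - W * D⁻¹ * Pᵀ)ᴴ = 1 - P * D⁻¹ * Wᵀ := by
    rw [conjTranspose_eq_transpose_of_trivial]
    simp [Matrix.transpose_mul, Matrix.mul_assoc, hDinv]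
  unfold blockBFGSUpdate
  rw [← hDdef]
  apply Matrix.PosSemidef.add
  · have := hE.mul_mul_conjTranspose_same (1 - W * D⁻¹ * Pᵀ)ᴴ
    rwa [conjTranspose_conjTranspose, hA] at this
  · have hDinvPD : (D⁻¹).PosDef := hD.inv
    have := hDinvPD.posSemidef.mul_mul_conjTranspose_same P
    rwa [conjTranspose_eq_transpose_of_trivial] at this
end

section
/- Let R ∈ ℝ^{n×n} be symmetric positive definite, let v₁, …, vₙ ∈ ℝⁿ be R-orthonormal (vᵢᵀ R vⱼ = δᵢⱼ), and let H_M ∈ ℝ^{n×n} and λ₁, …, λₙ ∈ ℝ satisfy H_M vⱼ = λⱼ R vⱼ with λⱼ ≥ 0 for each j. Let V ∈ ℝ^{n×n} have columns v₁, …, vₙ and let Γ ∈ ℝ^{n×n} be the diagonal matrix with entries λⱼ/(1 + λⱼ). Then H_M + R is invertible and (H_M + R)⁻¹ = R⁻¹ − V Γ Vᵀ. -/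
/-!
Collect the `R`-orthonormal eigenvectors as the columns of `V`, so that `Vᵀ R V = 1` and
`H_M V = R V Λ` with `Λ = diag(λⱼ)`. The first identity makes `V` invertible with
`R⁻¹ = V Vᵀ`, and the second gives `(H_M + R) V = R V (1 + Λ)`. Hence
`(H_M + R) · V (1 + Λ)⁻¹ Vᵀ = R V Vᵀ = 1`, and `(1 + λ)⁻¹ = 1 - λ / (1 + λ)` splits this
inverse as `V Vᵀ - V Γ Vᵀ`.
-/

open Matrix

namespace Matrix

variable {ι K : Type*} [Fintype ι] [DecidableEq ι] [Field K]

theorem mul_mul_transpose_eq_one_of_transpose_mul_mul_eq_one {R V : Matrix ι ι K}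
    (h : Vᵀ * R * V = 1) : R * (V * Vᵀ) = 1 := by
  have hV : V * (Vᵀ * R) = 1 := mul_eq_one_comm.mp h
  rw [mul_eq_one_comm, Matrix.mul_assoc, hV]

theorem add_mul_mul_diagonal_inv_mul_transpose_eq_one {R H V : Matrix ι ι K} {lam : ι → K}
    (hV : Vᵀ * R * V = 1) (hHV : H * V = R * V * diagonal lam) (hlam : ∀ j, 1 + lam j ≠ 0) :
    (H + R) * (V * diagonal (fun j => (1 + lam j)⁻¹) * Vᵀ) = 1 := by
  have hHRV : (H + R) * V = R * V * diagonal (fun j => 1 + lam j) := by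
    have hsum : diagonal (fun j => 1 + lam j) = 1 + diagonal lam := by
      rw [← diagonal_one, diagonal_add]
    rw [hsum, Matrix.mul_add, Matrix.mul_one, Matrix.add_mul, hHV, add_comm]
  have hdiag : diagonal (fun j => 1 + lam j) * diagonal (fun j => (1 + lam j)⁻¹) = 1 := by
    simp only [diagonal_mul_diagonal, mul_inv_cancel₀ (hlam _), diagonal_one]
  calc (H + R) * (V * diagonal (fun j => (1 + lam j)⁻¹) * Vᵀ)
      = R * V * (diagonal (fun j => 1 + lam j) * diagonal (fun j => (1 + lam j)⁻¹)) * Vᵀ := by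
        simp only [← Matrix.mul_assoc, hHRV]
    _ = 1 := by
        rw [hdiag, Matrix.mul_one, Matrix.mul_assoc,
          mul_mul_transpose_eq_one_of_transpose_mul_mul_eq_one hV]

theorem transpose_mul_mul_eq_one_of_orthonormal (R : Matrix ι ι K) (v : ι → ι → K)
    (horth : ∀ i j, v i ⬝ᵥ R *ᵥ v j = if i = j then 1 else 0) :
    (of fun i j => v j i)ᵀ * R * (of fun i j => v j i) = 1 := by
  ext i j
  rw [mul_mul_apply, one_apply]
  exact horth i j

theorem mul_of_eq_mul_of_mul_diagonal {R H : Matrix ι ι K} {v : ι → ι → K} {lam : ι → K}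
    (heig : ∀ j, H *ᵥ v j = lam j • R *ᵥ v j) :
    H * (of fun i j => v j i) = R * (of fun i j => v j i) * diagonal lam := by
  ext i j
  have hj := congrFun (heig j) i
  simp only [mulVec, dotProduct, Pi.smul_apply, smul_eq_mul] at hj
  rw [mul_diagonal]
  simp only [mul_apply, of_apply, hj, mul_comm]

end Matrix

theorem stmt14_general {n : ℕ} (R HM : Matrix (Fin n) (Fin n) ℝ)
    (v : Fin n → Fin n → ℝ)
    (horth : ∀ i j, v i ⬝ᵥ R.mulVec (v j) = if i = j then (1:ℝ) else 0)
    (lam : Fin n → ℝ) (hlam : ∀ j, 0 ≤ lam j)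
    (heig : ∀ j, HM.mulVec (v j) = lam j • R.mulVec (v j))
    -- `V` is the matrix whose j-th column is `v j`, `Γ = diag(λⱼ/(1+λⱼ))`
    (V Γ : Matrix (Fin n) (Fin n) ℝ)
    (hV : V = Matrix.of fun i j => v j i)
    (hΓ : Γ = Matrix.diagonal fun j => lam j / (1 + lam j)) :
    IsUnit (HM + R) ∧ (HM + R)⁻¹ = R⁻¹ - V * Γ * Vᵀ := by
  have hne : ∀ j, 1 + lam j ≠ 0 := fun j => by linarith [hlam j]
  have hVRV : Vᵀ * R * V = 1 := hV ▸ transpose_mul_mul_eq_one_of_orthonormal R v horth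
  have hinv := add_mul_mul_diagonal_inv_mul_transpose_eq_one hVRV
    (hV ▸ mul_of_eq_mul_of_mul_diagonal heig) hne
  have hsplit : diagonal (fun j => (1 + lam j)⁻¹) = 1 - Γ := by
    rw [hΓ, ← diagonal_one, diagonal_sub]
    congr 1
    ext j
    field_simp [hne j]
    ring
  refine ⟨IsUnit.of_mul_eq_one _ hinv, ?_⟩
  rw [inv_eq_right_inv hinv,
    inv_eq_right_inv (mul_mul_transpose_eq_one_of_transpose_mul_mul_eq_one hVRV),
    hsplit, Matrix.mul_sub, Matrix.mul_one, Matrix.sub_mul]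

theorem stmt14 {n : ℕ} (R HM : Matrix (Fin n) (Fin n) ℝ) (hR : R.PosDef)
    (v : Fin n → Fin n → ℝ)
    (horth : ∀ i j, v i ⬝ᵥ R.mulVec (v j) = if i = j then (1:ℝ) else 0)
    (lam : Fin n → ℝ) (hlam : ∀ j, 0 ≤ lam j)
    (heig : ∀ j, HM.mulVec (v j) = lam j • R.mulVec (v j))
    -- `V` is the matrix whose j-th column is `v j`, `Γ = diag(λⱼ/(1+λⱼ))`
    (V Γ : Matrix (Fin n) (Fin n) ℝ)
    (hV : V = Matrix.of fun i j => v j i)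
    (hΓ : Γ = Matrix.diagonal fun j => lam j / (1 + lam j)) :
    IsUnit (HM + R) ∧ (HM + R)⁻¹ = R⁻¹ - V * Γ * Vᵀ :=
  stmt14_general R HM v horth lam hlam heig V Γ hV hΓ
end

section
/- Let R ∈ ℝ^{n×n} be symmetric positive definite, let v₁, …, vₙ ∈ ℝⁿ be R-orthonormal (vᵢᵀ R vⱼ = δᵢⱼ), and let H_M ∈ ℝ^{n×n} and λ₁, …, λₙ ≥ 0 satisfy H_M vⱼ = λⱼ R vⱼ. For 1 ≤ r ≤ n define the rank-r truncated preconditioner E₀ = R⁻¹ − Σ_{j=1}^{r} (λⱼ/(1+λⱼ)) vⱼ vⱼᵀ. Then the preconditioned Hessian E₀ (H_M + R) satisfies E₀ (H_M + R) vⱼ = vⱼ for every j ≤ r, and E₀ (H_M + R) vⱼ = (1 + λⱼ) vⱼ for every j > r. -/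
/-! Since `HM vⱼ = λⱼ R vⱼ`, the matrix `HM + R` sends `vⱼ` to `(1 + λⱼ) R vⱼ`.
By `R`-orthonormality, `vᵢ vᵢᵀ R vⱼ = δᵢⱼ vᵢ`, so `E₀ R vⱼ = vⱼ − [j < r] λⱼ/(1+λⱼ) vⱼ`;
multiplying by `1 + λⱼ` gives `vⱼ` for `j < r` and `(1 + λⱼ) vⱼ` otherwise. -/

open Matrix

/-- The rank-`r` truncated preconditioner
`E₀ = R⁻¹ − Σ_{j<r} (λⱼ/(1+λⱼ)) vⱼ vⱼᵀ`. -/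
noncomputable def truncPrecond {n : ℕ} (R : Matrix (Fin n) (Fin n) ℝ)
    (v : Fin n → Fin n → ℝ) (lam : Fin n → ℝ) (r : ℕ) :
    Matrix (Fin n) (Fin n) ℝ :=
  R⁻¹ - ∑ j ∈ Finset.univ.filter (fun j : Fin n => (j : ℕ) < r),
    (lam j / (1 + lam j)) • vecMulVec (v j) (v j)

theorem sum_smul_vecMulVec_mulVec_mulVec_of_orthonormal {ι n : Type*} [Fintype n]
    [DecidableEq ι] (R : Matrix n n ℝ) (v : ι → n → ℝ)
    (horth : ∀ i j, v i ⬝ᵥ R *ᵥ v j = if i = j then (1 : ℝ) else 0)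
    (c : ι → ℝ) (s : Finset ι) (j : ι) :
    (∑ i ∈ s, c i • vecMulVec (v i) (v i)) *ᵥ (R *ᵥ v j) = if j ∈ s then c j • v j else 0 := by
  rw [sum_mulVec]
  have hterm : ∀ i, (c i • vecMulVec (v i) (v i)) *ᵥ (R *ᵥ v j) =
      if i = j then c j • v j else 0 := by
    intro i
    rw [smul_mulVec, vecMulVec_mulVec, horth i j]
    split_ifs with h <;> simp [h]
  simp only [hterm, Finset.sum_ite_eq']

theorem truncPrecond_mulVec_mulVec {n : ℕ} {R : Matrix (Fin n) (Fin n) ℝ} (hR : IsUnit R.det)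
    {v : Fin n → Fin n → ℝ}
    (horth : ∀ i j, v i ⬝ᵥ R *ᵥ v j = if i = j then (1 : ℝ) else 0)
    (lam : Fin n → ℝ) (r : ℕ) (j : Fin n) :
    truncPrecond R v lam r *ᵥ (R *ᵥ v j) =
      v j - if (j : ℕ) < r then (lam j / (1 + lam j)) • v j else 0 := by
  rw [truncPrecond, sub_mulVec, mulVec_mulVec, nonsing_inv_mul R hR, one_mulVec,
    sum_smul_vecMulVec_mulVec_mulVec_of_orthonormal R v horth]
  simp only [Finset.mem_filter, Finset.mem_univ, true_and]

theorem stmt15_general {n : ℕ} (R HM : Matrix (Fin n) (Fin n) ℝ) (hR : R.PosDef)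
    (v : Fin n → Fin n → ℝ)
    (horth : ∀ i j, v i ⬝ᵥ R.mulVec (v j) = if i = j then (1:ℝ) else 0)
    (lam : Fin n → ℝ) (hlam : ∀ j, 0 ≤ lam j)
    (heig : ∀ j, HM.mulVec (v j) = lam j • R.mulVec (v j))
    (r : ℕ) :
    ∀ j : Fin n,
      ((j : ℕ) < r →
        ((truncPrecond R v lam r) * (HM + R)).mulVec (v j) = v j) ∧
      (r ≤ (j : ℕ) →
        ((truncPrecond R v lam r) * (HM + R)).mulVec (v j) = (1 + lam j) • v j) := by
  intro j
  have hHR : (HM + R) *ᵥ v j = (1 + lam j) • R *ᵥ v j := by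
    rw [add_mulVec, heig j, add_smul, one_smul, add_comm]
  have hE := truncPrecond_mulVec_mulVec ((isUnit_iff_isUnit_det R).mp hR.isUnit) horth lam r j
  rw [← mulVec_mulVec, hHR, mulVec_smul, hE]
  constructor
  · intro hj
    have hpos : 0 < 1 + lam j := by linarith [hlam j]
    rw [if_pos hj, smul_sub, smul_smul, mul_div_cancel₀ _ hpos.ne', ← sub_smul]
    simp
  · intro hj
    rw [if_neg (Nat.not_lt.mpr hj), sub_zero]

theorem stmt15 {n : ℕ} (R HM : Matrix (Fin n) (Fin n) ℝ) (hR : R.PosDef)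
    (v : Fin n → Fin n → ℝ)
    (horth : ∀ i j, v i ⬝ᵥ R.mulVec (v j) = if i = j then (1:ℝ) else 0)
    (lam : Fin n → ℝ) (hlam : ∀ j, 0 ≤ lam j)
    (heig : ∀ j, HM.mulVec (v j) = lam j • R.mulVec (v j))
    (r : ℕ) (hr1 : 1 ≤ r) (hrn : r ≤ n) :
    ∀ j : Fin n,
      ((j : ℕ) < r →
        ((truncPrecond R v lam r) * (HM + R)).mulVec (v j) = v j) ∧
      (r ≤ (j : ℕ) →
        ((truncPrecond R v lam r) * (HM + R)).mulVec (v j) = (1 + lam j) • v j) :=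
  stmt15_general R HM hR v horth lam hlam heig r
end

section
/- Let J : ℝⁿ × ℝᵖ → ℝ be twice continuously differentiable, let Δθ ∈ ℝᵖ, set θ(t) = θ̄ + t Δθ, and let m̂ : [0,1] → ℝⁿ be differentiable with ∇_m J(m̂(t), θ(t)) = 0 for all t ∈ [0,1] and with H(m̂(t), θ(t)) positive definite for all t. Fix t ∈ [0,1) and suppose B(m̂(t), θ(t)) Δθ ≠ 0. For h > 0 define z(h) = m̂(t+h) − m̂(t) and y(h) = ∇_m J(m̂(t+h), θ(t+h)) − ∇_m J(m̂(t), θ(t)) − h B(m̂(t), θ(t)) Δθ. Then there exists δ > 0 such that the curvature condition y(h)ᵀ z(h) > 0 holds for all 0 < h < δ. -/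
/-!
Along the path `∇_m J` vanishes, so `y(h) = -h B Δθ` and the curvature condition reads
`⟪B Δθ, m̂(t+h) - m̂(t)⟫ < 0`. Differentiating `∇_m J(m̂(s), θ(s)) = 0` at `s = t` gives
`H m̂'(t) = -B Δθ`; hence `m̂'(t) ≠ 0` and `⟪B Δθ, m̂'(t)⟫ = -⟪m̂'(t), H m̂'(t)⟫ < 0`, and the
first-order expansion of `m̂` at `t` gives the sign for all small `h > 0`.
-/

open scoped RealInnerProductSpace

open Set Filter Topology

theorem HasDerivWithinAt.eventually_nhdsGT_lt_of_neg {g : ℝ → ℝ} {c t : ℝ}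
    (hg : HasDerivWithinAt g c (Ici t) t) (hc : c < 0) : ∀ᶠ s in 𝓝[>] t, g s < g t := by
  have hslope : ∀ᶠ s in 𝓝[>] t, slope g t s < 0 :=
    ((hasDerivWithinAt_iff_tendsto_slope' (lt_irrefl t)).1 hg.Ioi_of_Ici).eventually_lt_const hc
  filter_upwards [hslope, self_mem_nhdsWithin] with s hs (hts : t < s)
  rw [slope_def_field, div_neg_iff] at hs
  rcases hs with ⟨-, hneg⟩ | ⟨hsub, -⟩ <;> linarith

theorem exists_pos_forall_of_eventually_nhdsGT {P : ℝ → Prop} {t : ℝ}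
    (hP : ∀ᶠ s in 𝓝[>] t, P s) : ∃ δ > 0, ∀ h, 0 < h → h < δ → P (t + h) := by
  obtain ⟨u, htu, hu⟩ := mem_nhdsGT_iff_exists_Ioo_subset.1 hP
  exact ⟨u - t, sub_pos.2 htu, fun h h0 hδ => hu ⟨by linarith, by linarith⟩⟩

section PartialGradient

variable {n p : ℕ} {J : EuclideanSpace ℝ (Fin n) × EuclideanSpace ℝ (Fin p) → ℝ}

theorem gradM_eq_toDual_symm (hJ : Differentiable ℝ J) (m : EuclideanSpace ℝ (Fin n))
    (θ : EuclideanSpace ℝ (Fin p)) :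
    gradM J m θ = (InnerProductSpace.toDual ℝ _).symm ((fderiv ℝ J (m, θ)).comp (.inl ℝ _ _)) := by
  have hpartial : HasFDerivAt (fun m' => J (m', θ)) ((fderiv ℝ J (m, θ)).comp (.inl ℝ _ _)) m :=
    (hJ (m, θ)).hasFDerivAt.comp m (hasFDerivAt_prodMk_left m θ)
  rw [gradM, gradient, hpartial.fderiv]

theorem contDiff_uncurry_gradM (hJ : ContDiff ℝ 2 J) :
    ContDiff ℝ 1 (Function.uncurry (gradM J)) := by
  have hgrad : Function.uncurry (gradM J) = fun q =>
      (InnerProductSpace.toDual ℝ _).symm ((fderiv ℝ J q).comp (.inl ℝ _ _)) :=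
    funext fun q => gradM_eq_toDual_symm (hJ.differentiable two_ne_zero) q.1 q.2
  rw [hgrad]
  exact (InnerProductSpace.toDual ℝ _).symm.toLinearIsometry.contDiff.comp
    ((hJ.fderiv_right one_add_one_eq_two.le).clm_comp contDiff_const)

theorem hasFDerivAt_uncurry_gradM (hJ : ContDiff ℝ 2 J) (m : EuclideanSpace ℝ (Fin n))
    (θ : EuclideanSpace ℝ (Fin p)) :
    HasFDerivAt (Function.uncurry (gradM J)) ((HessM J m θ).coprod (MixedB J m θ)) (m, θ) := by
  have hG := ((contDiff_uncurry_gradM hJ).differentiable one_ne_zero (m, θ)).hasFDerivAt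
  have hHess : HessM J m θ = (fderiv ℝ (Function.uncurry (gradM J)) (m, θ)).comp (.inl ℝ _ _) :=
    (hG.comp (f := fun m' => (m', θ)) m (hasFDerivAt_prodMk_left m θ)).fderiv
  have hMixed : MixedB J m θ = (fderiv ℝ (Function.uncurry (gradM J)) (m, θ)).comp (.inr ℝ _ _) :=
    (hG.comp (f := fun θ' => (m, θ')) θ (hasFDerivAt_prodMk_right m θ)).fderiv
  rwa [hHess, hMixed, ContinuousLinearMap.coprod_comp_inl_inr]

theorem hessM_add_mixedB_eq_zero_of_gradM_eq_zero (hJ : ContDiff ℝ 2 J)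
    {m : ℝ → EuclideanSpace ℝ (Fin n)} {θ : ℝ → EuclideanSpace ℝ (Fin p)}
    {v : EuclideanSpace ℝ (Fin n)} {u : EuclideanSpace ℝ (Fin p)}
    {s : Set ℝ} {t : ℝ} (hm : HasDerivWithinAt m v s t) (hθ : HasDerivWithinAt θ u s t)
    (hs : UniqueDiffWithinAt ℝ s t) (ht : t ∈ s) (hopt : ∀ τ ∈ s, gradM J (m τ) (θ τ) = 0) :
    HessM J (m t) (θ t) v + MixedB J (m t) (θ t) u = 0 := by
  have hchain : HasDerivWithinAt (fun τ => gradM J (m τ) (θ τ))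
      (HessM J (m t) (θ t) v + MixedB J (m t) (θ t) u) s t :=
    (hasFDerivAt_uncurry_gradM hJ (m t) (θ t)).comp_hasDerivWithinAt
      (f := fun τ => (m τ, θ τ)) t (hm.prodMk hθ)
  have hconst : HasDerivWithinAt (fun τ => gradM J (m τ) (θ τ)) 0 s t :=
    (hasDerivWithinAt_const t s 0).congr hopt (hopt t ht)
  exact hs.eq_deriv s hchain hconst

end PartialGradient

theorem stmt16 {n p : ℕ}
    (J : EuclideanSpace ℝ (Fin n) × EuclideanSpace ℝ (Fin p) → ℝ)
    (hJ : ContDiff ℝ 2 J)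
    (θbar Δθ : EuclideanSpace ℝ (Fin p))
    (θpath : ℝ → EuclideanSpace ℝ (Fin p))
    (hθpath : ∀ t : ℝ, θpath t = θbar + t • Δθ)
    (mhat : ℝ → EuclideanSpace ℝ (Fin n))
    (hdiff : ∀ t ∈ Set.Icc (0:ℝ) 1, DifferentiableWithinAt ℝ mhat (Set.Icc (0:ℝ) 1) t)
    (hopt : ∀ t ∈ Set.Icc (0:ℝ) 1, gradM J (mhat t) (θpath t) = 0)
    (hpd : ∀ t ∈ Set.Icc (0:ℝ) 1, ∀ x : EuclideanSpace ℝ (Fin n), x ≠ 0 →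
      0 < ⟪x, HessM J (mhat t) (θpath t) x⟫)
    (t : ℝ) (ht : t ∈ Set.Ico (0:ℝ) 1)
    (hB : MixedB J (mhat t) (θpath t) Δθ ≠ 0) :
    ∃ δ > (0:ℝ), ∀ h : ℝ, 0 < h → h < δ →
      0 < ⟪gradM J (mhat (t + h)) (θpath (t + h)) - gradM J (mhat t) (θpath t)
              - h • MixedB J (mhat t) (θpath t) Δθ,
           mhat (t + h) - mhat t⟫ := by
  have ht' : t ∈ Icc (0:ℝ) 1 := Ico_subset_Icc_self ht
  set w := MixedB J (mhat t) (θpath t) Δθ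
  obtain ⟨v, hv⟩ : ∃ v, HasDerivWithinAt mhat v (Icc 0 1) t := ⟨_, (hdiff t ht').hasDerivWithinAt⟩
  have hθ : HasDerivAt θpath Δθ t := by
    rw [funext hθpath]
    simpa using ((hasDerivAt_id t).smul_const Δθ).const_add θbar
  have hHv : HessM J (mhat t) (θpath t) v = -w := eq_neg_of_add_eq_zero_left <|
    hessM_add_mixedB_eq_zero_of_gradM_eq_zero hJ hv hθ.hasDerivWithinAt
      (uniqueDiffOn_Icc one_pos t ht') ht' hopt
  have hv0 : v ≠ 0 := by
    rintro rfl
    exact hB (neg_eq_zero.1 (by rw [← hHv, map_zero]))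
  have hwv : ⟪w, v⟫ < 0 := by
    have := hpd t ht' v hv0
    rw [hHv, inner_neg_right, real_inner_comm] at this
    linarith
  have hdescent : ∀ᶠ s in 𝓝[>] t, ⟪w, mhat s⟫ < ⟪w, mhat t⟫ :=
    (((innerSL ℝ w).hasFDerivAt.comp_hasDerivWithinAt t hv).mono_of_mem_nhdsWithin
      (Icc_mem_nhdsGE_of_mem ht)).eventually_nhdsGT_lt_of_neg hwv
  obtain ⟨δ, hδ, hnear⟩ := exists_pos_forall_of_eventually_nhdsGT
    (Filter.Eventually.and (Icc_mem_nhdsGT_of_mem ht) hdescent)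
  refine ⟨δ, hδ, fun h hh hhδ => ?_⟩
  obtain ⟨hmem, hlt⟩ := hnear h hh hhδ
  rw [hopt _ hmem, hopt t ht', sub_self, zero_sub, inner_neg_left, real_inner_smul_left,
    inner_sub_right]
  linarith [mul_pos hh (sub_pos.2 hlt)]
end
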